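/- Let (X, δ) and (Y, δ_Y) be diversities. If there is an embedding π of (X, δ) into (Y, δ_Y) and (Y, δ_Y) is injective, then there is an embedding φ of (T_X, δ_T) into (Y, δ_Y) with π = φ ∘ κ. -/

import Mathlib

open scoped Classical

noncomputable section

/-- A diversity: axioms (D1) and (D2). -/
def IsDiversity {X : Type*} (δ : Finset X → ℝ) : Prop :=
  (∀ A, 0 ≤ δ A) ∧ (∀ A, δ A = 0 ↔ A.card ≤ 1) ∧
    ∀ A B C : Finset X, B ≠ ∅ → δ (A ∪ C) ≤ δ (A ∪ B) + δ (B ∪ C)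

/-- Membership in `P_X`: `f ∅ = 0` and `Σ_{A ∈ 𝓐} f A ≥ δ (⋃ 𝓐)` for every finite
collection `𝓐` of finite subsets of `X`. -/
def MemP {X : Type*} (δ : Finset X → ℝ) (f : Finset X → ℝ) : Prop :=
  f ∅ = 0 ∧ ∀ 𝓐 : Finset (Finset X), δ (𝓐.sup id) ≤ ∑ A ∈ 𝓐, f A

/-- Membership in the tight span `T_X`: the pointwise-minimal elements of `P_X`. -/
def MemT {X : Type*} (δ : Finset X → ℝ) (f : Finset X → ℝ) : Prop :=
  MemP δ f ∧ ∀ g : Finset X → ℝ, MemP δ g → (∀ A, g A ≤ f A) → g = f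

/-- The function `δ_T` on finite subsets of the tight span: `δ_T ∅ = 0` and for nonempty `F`,
`δ_T F = sup { δ(⋃𝓐) - Σ_{A ∈ 𝓐} inf_{f ∈ F} f A : 𝓐 a finite collection of finite subsets }`. -/
noncomputable def deltaT {X : Type*} (δ : Finset X → ℝ) (F : Finset (Finset X → ℝ)) : ℝ :=
  if F = ∅ then 0
  else sSup {r : ℝ | ∃ 𝓐 : Finset (Finset X),
    r = δ (𝓐.sup id) - ∑ A ∈ 𝓐, sInf ((fun f => f A) '' (F : Set (Finset X → ℝ)))}

/-- The Kuratowski-type map `κ` sends `x` to the function `h_x : A ↦ δ (A ∪ {x})`. -/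
def hfun {X : Type*} (δ : Finset X → ℝ) (x : X) : Finset X → ℝ :=
  fun A => δ (A ∪ {x})

universe u

/-- A non-expansive map between diversities. -/
def IsNonexpansive {Y Z : Type*} (δY : Finset Y → ℝ) (δZ : Finset Z → ℝ) (φ : Y → Z) : Prop :=
  ∀ A : Finset Y, δZ (A.image φ) ≤ δY A

/-- An embedding of diversities: injective and preserving the diversity of finite sets. -/
def IsDivEmbedding {Y Z : Type*} (δY : Finset Y → ℝ) (δZ : Finset Z → ℝ) (φ : Y → Z) : Prop :=
  Function.Injective φ ∧ ∀ A : Finset Y, δZ (A.image φ) = δY A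

/-- An injective diversity: every non-expansive map into it extends along any embedding. -/
def InjectiveDiversity {X : Type u} (δ : Finset X → ℝ) : Prop :=
  ∀ (Y₁ Y₂ : Type u) (δ₁ : Finset Y₁ → ℝ) (δ₂ : Finset Y₂ → ℝ),
    IsDiversity δ₁ → IsDiversity δ₂ →
    ∀ (π : Y₁ → Y₂) (φ : Y₁ → X), IsDivEmbedding δ₁ δ₂ π → IsNonexpansive δ₁ δ φ →
      ∃ ψ : Y₂ → X, IsNonexpansive δ₂ δ ψ ∧ φ = ψ ∘ π

/-!
Once `(T_X, δ_T)` is known to be a diversity and `κ` an embedding into it, injectivity of `Y`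
extends `π` along `κ` to a non-expansive `φ : T_X → Y`. Such an extension is automatically an
isometry: for `f ∈ P_X` one has `δ_T (κ A ∪ {f}) ≤ f A`, hence `δ_Y (π A ∪ {φ f}) ≤ f A`, and
chaining the sets `π A` to `φ F` through (D2) in `Y` bounds every term of the supremum defining
`δ_T F` by `δ_Y (φ F)`, where `f ∈ F` is chosen to attain `inf_{f ∈ F} f A`. Injectivity of
`φ` on `T_X` follows, as `δ_T` vanishes only on singletons.
-/

lemma Finset.sum_union_le_of_nonneg {ι M : Type*} [DecidableEq ι] [AddCommMonoid M]
    [PartialOrder M] [IsOrderedAddMonoid M] {f : ι → M} {s t : Finset ι}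
    (h : ∀ i ∈ s ∩ t, 0 ≤ f i) : ∑ i ∈ s ∪ t, f i ≤ ∑ i ∈ s, f i + ∑ i ∈ t, f i := by
  rw [← Finset.sum_union_inter]
  exact le_add_of_nonneg_right (Finset.sum_nonneg h)

namespace IsDiversity

variable {X : Type*} {δ : Finset X → ℝ}

lemma empty (hδ : IsDiversity δ) : δ ∅ = 0 := (hδ.2.1 ∅).2 (by simp)

lemma singleton (hδ : IsDiversity δ) (x : X) : δ {x} = 0 := (hδ.2.1 _).2 (by simp)

lemma le_union (hδ : IsDiversity δ) (A S : Finset X) : δ A ≤ δ (A ∪ S) := by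
  induction S using Finset.induction_on with
  | empty => simp
  | @insert b S _ ih =>
    have h := hδ.2.2 (A ∪ S) {b} ∅ (by simp)
    rw [Finset.union_empty, Finset.union_empty, hδ.singleton, add_zero] at h
    rw [Finset.union_insert, Finset.insert_eq, Finset.union_comm {b}]
    exact ih.trans h

lemma mono (hδ : IsDiversity δ) {A B : Finset X} (h : A ⊆ B) : δ A ≤ δ B := by
  simpa [Finset.union_eq_right.2 h] using hδ.le_union A B

lemma sup_union_le_sum {ι : Type*} (hδ : IsDiversity δ) (s : Finset ι) (A : ι → Finset X)
    (b : ι → X) {C : Finset X} (hb : ∀ i ∈ s, b i ∈ C) :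
    δ (s.sup A ∪ C) ≤ ∑ i ∈ s, δ (A i ∪ {b i}) + δ C := by
  induction s using Finset.induction_on with
  | empty => simp
  | @insert i s hi ih =>
    have hbi : {b i} ∪ (s.sup A ∪ C) = s.sup A ∪ C := by
      have : b i ∈ C := hb i (Finset.mem_insert_self i s)
      grind
    have h := hδ.2.2 (A i) {b i} (s.sup A ∪ C) (by simp)
    rw [hbi] at h
    rw [Finset.sup_insert, Finset.sup_eq_union, Finset.union_assoc, Finset.sum_insert hi]
    linarith [ih fun j hj => hb j (Finset.mem_insert_of_mem hj)]

end IsDiversity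

namespace MemP

variable {X : Type*} {δ : Finset X → ℝ} {f : Finset X → ℝ}

lemma le_apply (hf : MemP δ f) (A : Finset X) : δ A ≤ f A := by
  simpa using hf.2 {A}

lemma nonneg (hδ : IsDiversity δ) (hf : MemP δ f) (A : Finset X) : 0 ≤ f A :=
  (hδ.1 A).trans (hf.le_apply A)

lemma union_sup_le (hδ : IsDiversity δ) (hf : MemP δ f) (A : Finset X)
    (𝓑 : Finset (Finset X)) : δ (A ∪ 𝓑.sup id) ≤ f A + ∑ B ∈ 𝓑, f B := by
  have h := hf.2 (insert A 𝓑)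
  rw [Finset.sup_insert, Finset.sup_eq_union, id] at h
  refine h.trans ?_
  by_cases hA : A ∈ 𝓑
  · rw [Finset.insert_eq_of_mem hA]
    linarith [hf.nonneg hδ A]
  · rw [Finset.sum_insert hA]

end MemP

section InfEval

variable {X : Type*} {δ : Finset X → ℝ} {F : Finset (Finset X → ℝ)}

/-- The summand `inf_{f ∈ F} f A` of `deltaT`; its value at `F = ∅` is the junk `sInf ∅ = 0`. -/
def infEval (F : Finset (Finset X → ℝ)) (A : Finset X) : ℝ :=
  sInf ((fun f => f A) '' (F : Set (Finset X → ℝ)))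

lemma infEval_eq_inf' (hF : F.Nonempty) (A : Finset X) :
    infEval F A = F.inf' hF (fun f => f A) :=
  (Finset.inf'_eq_csInf_image F hF _).symm

lemma infEval_le {f : Finset X → ℝ} (hf : f ∈ F) (A : Finset X) : infEval F A ≤ f A := by
  rw [infEval_eq_inf' ⟨f, hf⟩]
  exact Finset.inf'_le _ hf

lemma exists_infEval_eq (hF : F.Nonempty) (A : Finset X) : ∃ f ∈ F, infEval F A = f A := by
  rw [infEval_eq_inf' hF]
  exact Finset.exists_mem_eq_inf' hF _

lemma infEval_nonneg (hδ : IsDiversity δ) (hF : ∀ f ∈ F, MemP δ f) (A : Finset X) :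
    0 ≤ infEval F A := by
  rcases F.eq_empty_or_nonempty with rfl | hne
  · simp [infEval]
  · obtain ⟨f, hf, heq⟩ := exists_infEval_eq hne A
    exact heq ▸ (hF f hf).nonneg hδ A

lemma min_infEval_le_infEval_union {G H : Finset (Finset X → ℝ)} (hFH : (F ∪ H).Nonempty)
    (A : Finset X) : min (infEval (F ∪ G) A) (infEval (G ∪ H) A) ≤ infEval (F ∪ H) A := by
  obtain ⟨w, hw, heq⟩ := exists_infEval_eq hFH A
  rw [heq]
  rcases Finset.mem_union.1 hw with hw | hw
  · exact min_le_of_left_le (infEval_le (Finset.mem_union_left G hw) A)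
  · exact min_le_of_right_le (infEval_le (Finset.mem_union_right G hw) A)

end InfEval

section DeltaT

variable {X : Type*} {δ : Finset X → ℝ} {F : Finset (Finset X → ℝ)}

/-- Grouping the sets of `𝓐` by a function of `F` attaining `infEval F A`, each function of `F`
pays for its group through (D2) at the cost of a single `f {x}`. -/
lemma le_sum_apply_singleton_add_sum_infEval (hδ : IsDiversity δ) (hF : F.Nonempty)
    (hP : ∀ f ∈ F, MemP δ f) (x : X) (𝓐 : Finset (Finset X)) :
    δ (𝓐.sup id) ≤ ∑ f ∈ F, f {x} + ∑ A ∈ 𝓐, infEval F A := by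
  choose σ hσF hσ using exists_infEval_eq hF
  set fiber : (Finset X → ℝ) → Finset (Finset X) := fun f => 𝓐.filter (σ · = f)
  have hsup : 𝓐.sup id = F.sup fun f => (fiber f).sup id := by
    rw [← Finset.sup_biUnion, Finset.biUnion_filter_eq_of_maps_to fun A _ => hσF A]
  have hfiber : ∀ f ∈ F, δ ((fiber f).sup id ∪ {x}) ≤ f {x} + ∑ A ∈ fiber f, infEval F A := by
    intro f hf
    rw [Finset.union_comm]
    refine ((hP f hf).union_sup_le hδ {x} _).trans_eq ?_
    congr 1
    refine Finset.sum_congr rfl fun A hA => ?_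
    rw [hσ A, (Finset.mem_filter.1 hA).2]
  calc δ (𝓐.sup id) ≤ δ (𝓐.sup id ∪ {x}) := hδ.le_union _ _
    _ ≤ ∑ f ∈ F, δ ((fiber f).sup id ∪ {x}) + δ {x} := by
        rw [hsup]
        exact hδ.sup_union_le_sum F _ (fun _ => x) fun _ _ => Finset.mem_singleton_self x
    _ ≤ ∑ f ∈ F, (f {x} + ∑ A ∈ fiber f, infEval F A) := by
        rw [hδ.singleton, add_zero]
        exact Finset.sum_le_sum hfiber
    _ = ∑ f ∈ F, f {x} + ∑ A ∈ 𝓐, infEval F A := by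
        rw [Finset.sum_add_distrib, Finset.sum_fiberwise_of_maps_to fun A _ => hσF A]

lemma bddAbove_deltaT_set (hδ : IsDiversity δ) (hF : F.Nonempty) (hP : ∀ f ∈ F, MemP δ f) :
    BddAbove {r : ℝ | ∃ 𝓐 : Finset (Finset X), r = δ (𝓐.sup id) - ∑ A ∈ 𝓐, infEval F A} := by
  rcases isEmpty_or_nonempty X with hX | ⟨⟨x⟩⟩
  · refine ⟨0, ?_⟩
    rintro r ⟨𝓐, rfl⟩
    rw [Finset.eq_empty_of_isEmpty (𝓐.sup id), hδ.empty, zero_sub, neg_nonpos]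
    exact Finset.sum_nonneg fun A _ => infEval_nonneg hδ hP A
  · refine ⟨∑ f ∈ F, f {x}, ?_⟩
    rintro r ⟨𝓐, rfl⟩
    linarith [le_sum_apply_singleton_add_sum_infEval hδ hF hP x 𝓐]

lemma le_deltaT (hδ : IsDiversity δ) (hF : F.Nonempty) (hP : ∀ f ∈ F, MemP δ f)
    (𝓐 : Finset (Finset X)) : δ (𝓐.sup id) - ∑ A ∈ 𝓐, infEval F A ≤ deltaT δ F := by
  rw [deltaT, if_neg hF.ne_empty]
  exact le_csSup (bddAbove_deltaT_set hδ hF hP) ⟨𝓐, rfl⟩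

lemma deltaT_le {c : ℝ} (hc : 0 ≤ c)
    (h : ∀ 𝓐 : Finset (Finset X), δ (𝓐.sup id) - ∑ A ∈ 𝓐, infEval F A ≤ c) :
    deltaT δ F ≤ c := by
  rw [deltaT]
  split_ifs
  · exact hc
  · exact Real.sSup_le (by rintro r ⟨𝓐, rfl⟩; exact h 𝓐) hc

lemma deltaT_nonneg (hδ : IsDiversity δ) (hP : ∀ f ∈ F, MemP δ f) : 0 ≤ deltaT δ F := by
  rcases F.eq_empty_or_nonempty with rfl | hF
  · simp [deltaT]
  · simpa [hδ.empty] using le_deltaT hδ hF hP ∅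

lemma deltaT_singleton (hδ : IsDiversity δ) {f : Finset X → ℝ} (hf : MemP δ f) :
    deltaT δ {f} = 0 := by
  refine le_antisymm (deltaT_le le_rfl fun 𝓐 => ?_) (deltaT_nonneg hδ (by simpa using hf))
  have hinf : ∀ A, infEval {f} A = f A := fun A => by simp [infEval]
  simp only [hinf]
  linarith [hf.2 𝓐]

/-- `infEval F` then lies in `P_X` below every member of `F`. -/
lemma eq_of_deltaT_eq_zero (hδ : IsDiversity δ) (hT : ∀ f ∈ F, MemT δ f) (h0 : deltaT δ F = 0)
    {f g : Finset X → ℝ} (hf : f ∈ F) (hg : g ∈ F) : f = g := by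
  have hinf : MemP δ (infEval F) := by
    refine ⟨?_, fun 𝓐 => ?_⟩
    · obtain ⟨w, hw, heq⟩ := exists_infEval_eq ⟨f, hf⟩ ∅
      rw [heq, (hT w hw).1.1]
    · linarith [le_deltaT hδ ⟨f, hf⟩ (fun w hw => (hT w hw).1) 𝓐]
  have hmin : ∀ w ∈ F, infEval F = w := fun w hw => (hT w hw).2 _ hinf (infEval_le hw)
  rw [← hmin f hf, hmin g hg]

end DeltaT

section TightSpan

variable {X : Type*} {δ : Finset X → ℝ} {f : Finset X → ℝ}

lemma MemP.update (hf : MemP δ f) {A : Finset X} (hA : A ≠ ∅) {c : ℝ}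
    (h : ∀ 𝓑 : Finset (Finset X), δ (A ∪ 𝓑.sup id) ≤ c + ∑ B ∈ 𝓑, f B) :
    MemP δ (Function.update f A c) := by
  refine ⟨by rw [Function.update_of_ne hA.symm, hf.1], fun 𝓒 => ?_⟩
  by_cases hA𝓒 : A ∈ 𝓒
  · rw [Finset.sum_update_of_mem hA𝓒]
    have hsup : 𝓒.sup id = A ∪ (𝓒 \ {A}).sup id := by
      conv_lhs => rw [← Finset.insert_erase hA𝓒]
      rw [Finset.sup_insert, Finset.erase_eq]
      rfl
    exact hsup ▸ h _
  · rw [Finset.sum_update_of_notMem hA𝓒]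
    exact hf.2 𝓒

/-- Tightness: no value of `f` can be lowered within `P_X`. -/
lemma MemT.exists_lt_add (hδ : IsDiversity δ) (hf : MemT δ f) (A : Finset X) {ε : ℝ}
    (hε : 0 < ε) : ∃ 𝓑 : Finset (Finset X), f A < δ (A ∪ 𝓑.sup id) - ∑ B ∈ 𝓑, f B + ε := by
  by_contra! h
  have hA : A ≠ ∅ := by
    rintro rfl
    have := h ∅
    simp only [Finset.sup_empty, Finset.bot_eq_empty, Finset.union_empty, Finset.sum_empty,
      hf.1.1] at this
    linarith [hδ.1 ∅]
  have hP := hf.1.update hA (c := f A - ε) fun 𝓑 => by linarith [h 𝓑]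
  have hle : ∀ B, Function.update f A (f A - ε) B ≤ f B := by
    intro B
    rcases eq_or_ne B A with rfl | hB
    · simp only [Function.update_self]
      linarith
    · rw [Function.update_of_ne hB]
  have := congrFun (hf.2 _ hP hle) A
  rw [Function.update_self] at this
  linarith

lemma hfun_self (hδ : IsDiversity δ) (x : X) : hfun δ x {x} = 0 := by
  simp [hfun, hδ.singleton]

lemma hfun_memP (hδ : IsDiversity δ) (x : X) : MemP δ (hfun δ x) := by
  refine ⟨by simp [hfun, hδ.singleton], fun 𝓐 => ?_⟩
  calc δ (𝓐.sup id) ≤ δ (𝓐.sup id ∪ {x}) := hδ.le_union _ _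
    _ ≤ ∑ A ∈ 𝓐, δ (A ∪ {x}) + δ {x} :=
        hδ.sup_union_le_sum 𝓐 id (fun _ => x) fun _ _ => Finset.mem_singleton_self x
    _ = ∑ A ∈ 𝓐, hfun δ x A := by rw [hδ.singleton, add_zero]; rfl

lemma hfun_memT (hδ : IsDiversity δ) (x : X) : MemT δ (hfun δ x) := by
  refine ⟨hfun_memP hδ x, fun g hg hle => funext fun A => (hle A).antisymm ?_⟩
  have hgx : g {x} = 0 := le_antisymm ((hle {x}).trans_eq (hfun_self hδ x)) (hg.nonneg hδ {x})
  simpa [hfun, hgx] using hg.union_sup_le hδ A {{x}}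

lemma hfun_injective (hδ : IsDiversity δ) : Function.Injective (hfun δ) := by
  intro x y hxy
  have h : δ ({y} ∪ {x}) = 0 := by
    change hfun δ x {y} = 0
    rw [hxy, hfun_self hδ]
  exact Finset.card_le_one.1 ((hδ.2.1 _).1 h) x (by simp) y (by simp)

/-- The sets `B` whose infimum is attained at some `hfun δ a` are joined to `A` through `a`; the
others are absorbed, together with `A`, by the defining inequality of `f ∈ P_X`. -/
lemma deltaT_insert_image_hfun_le (hδ : IsDiversity δ) (hf : MemP δ f) (A : Finset X) :
    deltaT δ (insert f (A.image (hfun δ))) ≤ f A := by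
  rcases A.eq_empty_or_nonempty with rfl | ⟨a₀, ha₀⟩
  · simp [deltaT_singleton hδ hf, hf.1]
  set F₀ := insert f (A.image (hfun δ))
  refine deltaT_le (hf.nonneg hδ A) fun 𝓑 => ?_
  have hcase : ∀ B, ∃ a ∈ A, infEval F₀ B = f B ∨ infEval F₀ B = δ (B ∪ {a}) := by
    intro B
    obtain ⟨w, hw, heq⟩ := exists_infEval_eq (F := F₀) (Finset.insert_nonempty _ _) B
    rcases Finset.mem_insert.1 hw with rfl | hw
    · exact ⟨a₀, ha₀, .inl heq⟩
    · obtain ⟨a, ha, rfl⟩ := Finset.mem_image.1 hw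
      exact ⟨a, ha, .inr heq⟩
  choose a haA hcase using hcase
  set p : Finset X → Prop := fun B => infEval F₀ B = f B
  set 𝓑₁ := 𝓑.filter fun B => ¬ p B
  set 𝓑₂ := 𝓑.filter p
  have hsub : 𝓑.sup id ⊆ 𝓑₁.sup id ∪ (A ∪ 𝓑₂.sup id) := by
    rw [← Finset.filter_union_filter_not_eq p 𝓑, Finset.sup_union, Finset.sup_eq_union]
    grind
  have h𝓑₁ : ∑ B ∈ 𝓑₁, δ (B ∪ {a B}) = ∑ B ∈ 𝓑₁, infEval F₀ B :=
    Finset.sum_congr rfl fun B hB =>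
      ((hcase B).resolve_left (Finset.mem_filter.1 hB).2).symm
  have h𝓑₂ : ∑ B ∈ 𝓑₂, f B = ∑ B ∈ 𝓑₂, infEval F₀ B :=
    Finset.sum_congr rfl fun B hB => (Finset.mem_filter.1 hB).2.symm
  have hchain := hδ.sup_union_le_sum 𝓑₁ id a fun B _ => Finset.mem_union_left (𝓑₂.sup id) (haA B)
  have hsplit := Finset.sum_filter_add_sum_filter_not 𝓑 p (infEval F₀)
  have hA := hf.union_sup_le hδ A 𝓑₂
  simp only [id] at hchain
  linarith [hδ.mono hsub]

lemma deltaT_image_hfun (hδ : IsDiversity δ) (A : Finset X) :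
    deltaT δ (A.image (hfun δ)) = δ A := by
  rcases A.eq_empty_or_nonempty with rfl | ⟨a, ha⟩
  · simp [deltaT, hδ.empty]
  apply le_antisymm
  · have h := deltaT_insert_image_hfun_le hδ (hfun_memP hδ a) A
    rwa [Finset.insert_eq_of_mem (Finset.mem_image_of_mem _ ha), hfun,
      Finset.union_eq_left.2 (Finset.singleton_subset_iff.2 ha)] at h
  · have hP : ∀ f ∈ A.image (hfun δ), MemP δ f := by
      simp only [Finset.mem_image]
      rintro _ ⟨x, -, rfl⟩
      exact hfun_memP hδ x
    have hzero : ∀ B ∈ A.image ({·}), infEval (A.image (hfun δ)) B = 0 := by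
      simp only [Finset.mem_image]
      rintro _ ⟨b, hb, rfl⟩
      refine le_antisymm ?_ (infEval_nonneg hδ hP _)
      exact (infEval_le (Finset.mem_image_of_mem _ hb) _).trans_eq (hfun_self hδ b)
    have h := le_deltaT hδ ⟨_, Finset.mem_image_of_mem _ ha⟩ hP (A.image ({·}))
    rwa [Finset.sum_eq_zero hzero, sub_zero, Finset.sup_image, Function.id_comp,
      Finset.sup_singleton_eq_self] at h

end TightSpan

section Triangle

variable {X : Type*} {δ : Finset X → ℝ}

/-- Tightness of `g ∈ G` turns `g (⋃ 𝓑)` into a term of the supremum defining `deltaT δ G`. -/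
lemma MemT.apply_sup_le (hδ : IsDiversity δ) {G : Finset (Finset X → ℝ)}
    (hG : ∀ f ∈ G, MemP δ f) {g : Finset X → ℝ} (hg : g ∈ G) (hgT : MemT δ g)
    (𝓑 : Finset (Finset X)) : g (𝓑.sup id) ≤ deltaT δ G + ∑ B ∈ 𝓑, infEval G B := by
  refine le_of_forall_pos_lt_add fun ε hε => ?_
  obtain ⟨𝓓, h𝓓⟩ := hgT.exists_lt_add hδ (𝓑.sup id) hε
  have hT := le_deltaT hδ ⟨g, hg⟩ hG (𝓑 ∪ 𝓓)
  have hsum : ∑ B ∈ 𝓑 ∪ 𝓓, infEval G B ≤ ∑ B ∈ 𝓑, infEval G B + ∑ D ∈ 𝓓, g D :=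
    (Finset.sum_union_le_of_nonneg fun B _ => infEval_nonneg hδ hG B).trans
      (add_le_add le_rfl (Finset.sum_le_sum fun D _ => infEval_le hg D))
  rw [Finset.sup_union, Finset.sup_eq_union] at hT
  linarith

lemma le_deltaT_add_deltaT (hδ : IsDiversity δ) {F G H : Finset (Finset X → ℝ)}
    (hFG : ∀ f ∈ F ∪ G, MemP δ f) (hGH : ∀ f ∈ G ∪ H, MemP δ f) {g : Finset X → ℝ} (hg : g ∈ G)
    (hgT : MemT δ g) (𝓐 𝓑 : Finset (Finset X)) :
    δ (𝓐.sup id ∪ 𝓑.sup id) - ∑ A ∈ 𝓐, infEval (F ∪ G) A - ∑ B ∈ 𝓑, infEval (G ∪ H) B ≤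
      deltaT δ (F ∪ G) + deltaT δ (G ∪ H) := by
  have hT := le_deltaT hδ ⟨g, Finset.mem_union_right F hg⟩ hFG (insert (𝓑.sup id) 𝓐)
  rw [Finset.sup_insert, Finset.sup_eq_union, id, Finset.union_comm] at hT
  have hsum : ∑ A ∈ insert (𝓑.sup id) 𝓐, infEval (F ∪ G) A ≤
      g (𝓑.sup id) + ∑ A ∈ 𝓐, infEval (F ∪ G) A := by
    rw [Finset.insert_eq]
    refine (Finset.sum_union_le_of_nonneg fun A _ => infEval_nonneg hδ hFG A).trans ?_
    rw [Finset.sum_singleton]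
    exact add_le_add_left (infEval_le (Finset.mem_union_right F hg) _) _
  have hg𝓑 := hgT.apply_sup_le hδ hGH (Finset.mem_union_left H hg) 𝓑
  linarith

/-- Each `A` is charged to whichever of `F ∪ G`, `G ∪ H` has the smaller infimum at `A`. -/
lemma deltaT_union_le (hδ : IsDiversity δ) {F G H : Finset (Finset X → ℝ)}
    (hF : ∀ f ∈ F, MemP δ f) (hG : ∀ g ∈ G, MemT δ g) (hH : ∀ h ∈ H, MemP δ h)
    (hGne : G.Nonempty) : deltaT δ (F ∪ H) ≤ deltaT δ (F ∪ G) + deltaT δ (G ∪ H) := by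
  obtain ⟨g, hg⟩ := hGne
  have hFG : ∀ f ∈ F ∪ G, MemP δ f := by
    simp only [Finset.mem_union]
    exact fun f hf => hf.elim (hF f) fun hf => (hG f hf).1
  have hGH : ∀ f ∈ G ∪ H, MemP δ f := by
    simp only [Finset.mem_union]
    exact fun f hf => hf.elim (fun hf => (hG f hf).1) (hH f)
  have hnonneg := add_nonneg (deltaT_nonneg hδ hFG) (deltaT_nonneg hδ hGH)
  rcases (F ∪ H).eq_empty_or_nonempty with hFH | hFH
  · rwa [hFH, deltaT, if_pos rfl]
  refine deltaT_le hnonneg fun 𝓐 => ?_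
  set m : Finset X → ℝ := fun A => min (infEval (F ∪ G) A) (infEval (G ∪ H) A)
  set p : Finset X → Prop := fun A => infEval (F ∪ G) A ≤ infEval (G ∪ H) A
  have h𝓐₁ : ∑ A ∈ 𝓐.filter p, infEval (F ∪ G) A = ∑ A ∈ 𝓐.filter p, m A :=
    Finset.sum_congr rfl fun A hA => (min_eq_left (Finset.mem_filter.1 hA).2).symm
  have h𝓐₂ : ∑ A ∈ 𝓐.filter (¬ p ·), infEval (G ∪ H) A = ∑ A ∈ 𝓐.filter (¬ p ·), m A :=
    Finset.sum_congr rfl fun A hA => (min_eq_right (not_le.1 (Finset.mem_filter.1 hA).2).le).symm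
  have hsplit := Finset.sum_filter_add_sum_filter_not 𝓐 p m
  have hmin : ∑ A ∈ 𝓐, m A ≤ ∑ A ∈ 𝓐, infEval (F ∪ H) A :=
    Finset.sum_le_sum fun A _ => min_infEval_le_infEval_union hFH A
  have h := le_deltaT_add_deltaT hδ hFG hGH hg (hG g hg) (𝓐.filter p) (𝓐.filter (¬ p ·))
  rw [← Finset.sup_eq_union, ← Finset.sup_union, Finset.filter_union_filter_not_eq] at h
  linarith

end Triangle

section Embedding

variable {X : Type*} {δ : Finset X → ℝ}

abbrev TightSpan (δ : Finset X → ℝ) : Type _ := {f : Finset X → ℝ // MemT δ f}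

def tightSpanDiversity (δ : Finset X → ℝ) (F : Finset (TightSpan δ)) : ℝ :=
  deltaT δ (F.image Subtype.val)

lemma isDiversity_tightSpanDiversity (hδ : IsDiversity δ) :
    IsDiversity (tightSpanDiversity δ) := by
  have hT : ∀ F : Finset (TightSpan δ), ∀ f ∈ F.image Subtype.val, MemT δ f := by
    simp only [Finset.mem_image]
    rintro F _ ⟨t, -, rfl⟩
    exact t.2
  refine ⟨fun F => deltaT_nonneg hδ fun f hf => (hT F f hf).1,
    fun F => ⟨fun h0 => ?_, fun h1 => ?_⟩, fun A B C hB => ?_⟩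
  · exact Finset.card_le_one.2 fun s hs t ht => Subtype.ext <| eq_of_deltaT_eq_zero hδ (hT F) h0
      (Finset.mem_image_of_mem _ hs) (Finset.mem_image_of_mem _ ht)
  · rcases Nat.le_one_iff_eq_zero_or_eq_one.1 h1 with h | h
    · simp [Finset.card_eq_zero.1 h, tightSpanDiversity, deltaT]
    · obtain ⟨t, rfl⟩ := Finset.card_eq_one.1 h
      simp [tightSpanDiversity, deltaT_singleton hδ t.2.1]
  · simp only [tightSpanDiversity, Finset.image_union]
    exact deltaT_union_le hδ (fun f hf => (hT A f hf).1) (hT B) (fun f hf => (hT C f hf).1)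
      ((Finset.nonempty_iff_ne_empty.2 hB).image _)

def toTightSpan (hδ : IsDiversity δ) (x : X) : TightSpan δ := ⟨hfun δ x, hfun_memT hδ x⟩

lemma isDivEmbedding_toTightSpan (hδ : IsDiversity δ) :
    IsDivEmbedding δ (tightSpanDiversity δ) (toTightSpan hδ) :=
  ⟨fun _ _ h => hfun_injective hδ (congrArg Subtype.val h), fun A => by
    simp only [tightSpanDiversity, Finset.image_image]
    exact deltaT_image_hfun hδ A⟩

variable {Y : Type*} {δY : Finset Y → ℝ}

lemma deltaT_le_of_extends (hδ : IsDiversity δ) (hδY : IsDiversity δY) {π : X → Y}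
    (hπ : IsDivEmbedding δ δY π) {φ : (Finset X → ℝ) → Y} (hφπ : φ ∘ hfun δ = π)
    (hφ : ∀ F, (∀ f ∈ F, MemT δ f) → δY (F.image φ) ≤ deltaT δ F)
    {F : Finset (Finset X → ℝ)} (hF : ∀ f ∈ F, MemT δ f) : deltaT δ F ≤ δY (F.image φ) := by
  rcases F.eq_empty_or_nonempty with rfl | hFne
  · simp [deltaT, hδY.1]
  choose σ hσF hσ using exists_infEval_eq hFne
  have hterm : ∀ A, δY (A.image π ∪ {φ (σ A)}) ≤ infEval F A := by
    intro A
    have himage : (insert (σ A) (A.image (hfun δ))).image φ = A.image π ∪ {φ (σ A)} := by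
      rw [Finset.image_insert, Finset.image_image, hφπ, Finset.insert_eq, Finset.union_comm]
    have hT : ∀ f ∈ insert (σ A) (A.image (hfun δ)), MemT δ f := by
      simp only [Finset.mem_insert, Finset.mem_image]
      rintro f (rfl | ⟨x, -, rfl⟩)
      exacts [hF _ (hσF A), hfun_memT hδ x]
    calc δY (A.image π ∪ {φ (σ A)}) ≤ deltaT δ (insert (σ A) (A.image (hfun δ))) :=
          himage ▸ hφ _ hT
      _ ≤ σ A A := deltaT_insert_image_hfun_le hδ (hF _ (hσF A)).1 A
      _ = infEval F A := (hσ A).symm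
  refine deltaT_le (hδY.1 _) fun 𝓐 => ?_
  have himage : (𝓐.sup id).image π = 𝓐.sup (·.image π) := by
    rw [Finset.sup_eq_biUnion, Finset.biUnion_image, ← Finset.sup_eq_biUnion]
    rfl
  have hchain := hδY.sup_union_le_sum 𝓐 (·.image π) (fun A => φ (σ A))
    fun A _ => Finset.mem_image_of_mem φ (hσF A)
  have hsum := Finset.sum_le_sum fun A (_ : A ∈ 𝓐) => hterm A
  have hmono := hδY.mono (Finset.subset_union_left (s₁ := (𝓐.sup id).image π) (s₂ := F.image φ))
  rw [hπ.2, himage] at hmono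
  linarith

lemma image_extend_le_deltaT {ψ : TightSpan δ → Y}
    (hψ : IsNonexpansive (tightSpanDiversity δ) δY ψ) (y₀ : Y) {F : Finset (Finset X → ℝ)}
    (hF : ∀ f ∈ F, MemT δ f) :
    δY (F.image (Function.extend Subtype.val ψ fun _ => y₀)) ≤ deltaT δ F := by
  have hF' : (F.subtype (MemT δ)).image Subtype.val = F := by
    simpa [Finset.map_eq_image] using Finset.subtype_map_of_mem hF
  calc δY (F.image (Function.extend Subtype.val ψ fun _ => y₀))
      = δY ((F.subtype (MemT δ)).image ψ) := by
        conv_lhs => rw [← hF']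
        rw [Finset.image_image, Function.extend_comp Subtype.val_injective]
    _ ≤ tightSpanDiversity δ (F.subtype (MemT δ)) := hψ _
    _ = deltaT δ F := by rw [tightSpanDiversity, hF']

lemma injOn_of_deltaT_eq (hδ : IsDiversity δ) (hδY : IsDiversity δY) {φ : (Finset X → ℝ) → Y}
    (hφ : ∀ F, (∀ f ∈ F, MemT δ f) → δY (F.image φ) = deltaT δ F) :
    Set.InjOn φ {f | MemT δ f} := by
  intro f hf g hg hfg
  have hT : ∀ h ∈ ({f, g} : Finset (Finset X → ℝ)), MemT δ h := by simp [hf.out, hg.out]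
  have h0 : deltaT δ {f, g} = 0 := by
    rw [← hφ {f, g} hT, Finset.image_insert, Finset.image_singleton, hfg,
      Finset.insert_eq_of_mem (Finset.mem_singleton_self _), hδY.singleton]
  exact eq_of_deltaT_eq_zero hδ hT h0 (by simp) (by simp)

end Embedding

lemma InjectiveDiversity.nonempty {Y : Type u} {δY : Finset Y → ℝ} (hδY : IsDiversity δY)
    (hinj : InjectiveDiversity δY) : Nonempty Y := by
  have hzero : ∀ (Z : Type u) [Subsingleton Z], IsDiversity fun _ : Finset Z => (0 : ℝ) :=
    fun _ _ => ⟨fun _ => le_rfl, fun A => iff_of_true rfl (Finset.card_le_one_of_subsingleton A),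
      fun _ _ _ _ => by norm_num⟩
  obtain ⟨ψ, -⟩ := hinj PEmpty PUnit _ _ (hzero _) (hzero _) PEmpty.elim PEmpty.elim
    ⟨fun a => a.elim, fun _ => rfl⟩ fun A => by simp [Finset.eq_empty_of_isEmpty A, hδY.empty]
  exact ⟨ψ PUnit.unit⟩

/-- if `π` embeds `(X, δ)` into an injective diversity `(Y, δY)`, then there is
an embedding `φ` of `(T_X, δ_T)` into `(Y, δY)` with `π = φ ∘ κ`. -/
theorem embedding_of_tightSpan_into_injective {X Y : Type u}
    (δ : Finset X → ℝ) (δY : Finset Y → ℝ)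
    (hδ : IsDiversity δ) (hδY : IsDiversity δY)
    (hinj : InjectiveDiversity δY)
    (π : X → Y) (hπ : IsDivEmbedding δ δY π) :
    ∃ φ : (Finset X → ℝ) → Y,
      (∀ f g : Finset X → ℝ, MemT δ f → MemT δ g → φ f = φ g → f = g) ∧
      (∀ F : Finset (Finset X → ℝ), (∀ f ∈ F, MemT δ f) →
        δY (F.image φ) = deltaT δ F) ∧
      (∀ x : X, φ (hfun δ x) = π x) := by
  obtain ⟨y₀⟩ := hinj.nonempty hδY
  obtain ⟨ψ, hψ, hψπ⟩ := hinj X (TightSpan δ) δ (tightSpanDiversity δ) hδ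
    (isDiversity_tightSpanDiversity hδ) (toTightSpan hδ) π (isDivEmbedding_toTightSpan hδ)
    fun A => (hπ.2 A).le
  set φ : (Finset X → ℝ) → Y := Function.extend Subtype.val ψ fun _ => y₀
  have hφψ : φ ∘ Subtype.val = ψ := Function.extend_comp Subtype.val_injective _ _
  have hφπ : φ ∘ hfun δ = π := by
    rw [hψπ, ← hφψ]
    rfl
  have hφ : ∀ F, (∀ f ∈ F, MemT δ f) → δY (F.image φ) ≤ deltaT δ F :=
    fun F hF => image_extend_le_deltaT hψ y₀ hF
  have hiso : ∀ F, (∀ f ∈ F, MemT δ f) → δY (F.image φ) = deltaT δ F := fun F hF =>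
    (hφ F hF).antisymm (deltaT_le_of_extends hδ hδY hπ hφπ hφ hF)
  exact ⟨φ, fun f g hf hg hfg => injOn_of_deltaT_eq hδ hδY hiso hf hg hfg, hiso, congrFun hφπ⟩

end
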